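/- Let m, k, N be positive integers and let E = {v_1,…,v_N} ⊂ R^m be a set of nonzero vectors no two of which are collinear. Suppose 1/p_j ∈ [0,1], λ_j ∈ R, and there is a finite constant C such that Λ(f_1,…,f_N) ≤ C Π_{j=1}^N ‖f_j‖_{L^{p_j}_{λ_j}(R^k)} for all nonnegative measurable f_1,…,f_N on R^k. Then Σ_{j=1}^N 1/p_j ≥ 1. -/

import Mathlib

open MeasureTheory ENNReal
open scoped Classical

/-- The dot product `v · x ∈ ℝᵏ` for `v ∈ ℝᵐ` and `x ∈ (ℝᵏ)ᵐ`. -/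
noncomputable def dotv {m k : ℕ} (v : Fin m → ℝ)
    (x : Fin m → EuclideanSpace ℝ (Fin k)) : EuclideanSpace ℝ (Fin k) :=
  ∑ i, v i • x i

/-- The Brascamp–Lieb form `Λ(f₁,…,f_N) = ∫ ∏ f_j(v_j · x) dx`. -/
noncomputable def BLform {m k N : ℕ} (v : Fin N → Fin m → ℝ)
    (f : Fin N → EuclideanSpace ℝ (Fin k) → ℝ≥0∞) : ℝ≥0∞ :=
  ∫⁻ x : Fin m → EuclideanSpace ℝ (Fin k), ∏ j, f j (dotv (v j) x)

/-- The weighted norm `‖f‖_{L^p_α} = ‖ |·|^α f ‖_{L^p}`. -/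
noncomputable def wnorm {k : ℕ} (p α : ℝ)
    (f : EuclideanSpace ℝ (Fin k) → ℝ≥0∞) : ℝ≥0∞ :=
  (∫⁻ y : EuclideanSpace ℝ (Fin k), ((‖y‖₊ : ℝ≥0∞) ^ α * f y) ^ p) ^ (1 / p)

/-- A family of vectors in `ℝᵐ` is generic if every subfamily of cardinality `m`
is a basis of `ℝᵐ`. -/
def IsGeneric {m N : ℕ} (v : Fin N → Fin m → ℝ) : Prop :=
  ∀ s : Finset (Fin N), s.card = m →
    LinearIndependent ℝ (fun i : s => v i.1) ∧
      Submodule.span ℝ (v '' ↑s) = ⊤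

/-!
Test the estimate on `f_j(y) = |y|^(-β_j)` cut off to the dyadic annulus `2^(-M) ≤ |y| < 2^M`,
where `β_j = λ_j + k/p_j` makes `(|y|^λ_j f_j(y))^p_j = |y|^(-k)`. Since `|y|^(-k) dy` is
dilation invariant, each of the `2M` dyadic shells contributes at most `2^k |B(0,1)|`, so
`‖f_j‖ ≲ M^(1/p_j)` and the right-hand side is `≲ M^(∑ 1/p_j)`.

For the left-hand side, pick `L` such that the set `G` (`nondegenerateShell v L`) of `x` with
`1 ≤ |x| < 2` and `2^(-L) ≤ |v_j · x| < 2^L` for all `j` has positive measure (the hyperplanes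
`v_j · x = 0` are null). On each dilate `2^t G` with `|t| < M - L` the integrand of `Λ` is
homogeneous, and the dilates lie in disjoint dyadic shells; dilating in the direction where the
Jacobian beats the homogeneity gives about `M` disjoint pieces, each contributing at least `∫_G`,
so `Λ ≳ M`. Hence `M ≲ M^(∑ 1/p_j)` for all `M`, which forces `∑ 1/p_j ≥ 1`.
-/

open Set Filter Topology Function Module
open scoped Pointwise

namespace ENNReal

theorem rpow_sum {ι : Type*} (s : Finset ι) {x : ℝ≥0∞} (hx₀ : x ≠ 0) (hx : x ≠ ⊤) (f : ι → ℝ) :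
    x ^ (∑ i ∈ s, f i) = ∏ i ∈ s, x ^ f i := by
  induction s using Finset.cons_induction with
  | empty => simp
  | cons i s hi ih => rw [Finset.sum_cons, Finset.prod_cons, rpow_add _ _ hx₀ hx, ih]

end ENNReal

theorem one_le_of_forall_mul_natCast_le_mul_rpow {c F : ℝ≥0∞} {s : ℝ} (hc : c ≠ 0) (hF : F ≠ ⊤)
    (h : ∀ n : ℕ, 0 < n → n * c ≤ F * (n : ℝ≥0∞) ^ s) : 1 ≤ s := by
  by_contra! hs
  have hle : ∀ n : ℕ, 0 < n → c * (n : ℝ≥0∞) ^ (1 - s) ≤ F := by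
    intro n hn
    have hn₀ : (n : ℝ≥0∞) ^ s ≠ 0 := by simp [ENNReal.rpow_eq_zero_iff, hn.ne']
    have hn_top : (n : ℝ≥0∞) ^ s ≠ ⊤ := by simp [ENNReal.rpow_eq_top_iff, hn.ne']
    rw [← ENNReal.mul_le_mul_iff_left hn₀ hn_top, mul_assoc,
      ← ENNReal.rpow_add _ _ (by exact_mod_cast hn.ne') (by simp), sub_add_cancel,
      ENNReal.rpow_one, mul_comm]
    exact h n hn
  have hlim : Tendsto (fun n : ℕ => c * (n : ℝ≥0∞) ^ (1 - s)) atTop (𝓝 ⊤) := by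
    rw [← ENNReal.mul_top hc]
    exact ENNReal.Tendsto.const_mul
      ((ENNReal.tendsto_rpow_at_top (by linarith)).comp ENNReal.tendsto_nat_nhds_top)
      (Or.inl top_ne_zero)
  exact hF (top_le_iff.mp (le_of_tendsto hlim (eventually_atTop.2 ⟨1, fun n hn => hle n hn⟩)))

section Dyadic

variable {E : Type*} [NormedAddCommGroup E]

def dyadicShell (E : Type*) [NormedAddCommGroup E] (t : ℤ) : Set E :=
  {x | (2 : ℝ) ^ t ≤ ‖x‖ ∧ ‖x‖ < 2 ^ (t + 1)}

def dyadicAnnulus (E : Type*) [NormedAddCommGroup E] (M : ℕ) : Set E :=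
  {x | (2 : ℝ) ^ (-(M : ℤ)) ≤ ‖x‖ ∧ ‖x‖ < 2 ^ (M : ℤ)}

theorem measurableSet_dyadicShell [MeasurableSpace E] [OpensMeasurableSpace E] (t : ℤ) :
    MeasurableSet (dyadicShell E t) :=
  measurableSet_Ico.preimage continuous_norm.measurable

theorem measurableSet_dyadicAnnulus [MeasurableSpace E] [OpensMeasurableSpace E] (M : ℕ) :
    MeasurableSet (dyadicAnnulus E M) :=
  measurableSet_Ico.preimage continuous_norm.measurable

theorem pairwise_disjoint_dyadicShell : Pairwise (Disjoint on (dyadicShell E)) := by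
  refine (pairwise_disjoint_on _).mpr fun s t hst => Set.disjoint_left.mpr fun x hs ht => ?_
  have := (zpow_le_zpow_iff_right₀ (by norm_num : (1 : ℝ) < 2)).mpr (Int.add_one_le_iff.mpr hst)
  linarith [hs.2, ht.1]

theorem ne_zero_of_mem_dyadicAnnulus {M : ℕ} {x : E} (hx : x ∈ dyadicAnnulus E M) : x ≠ 0 :=
  norm_pos_iff.mp ((_root_.zpow_pos (by norm_num) _).trans_le hx.1)

theorem dyadicAnnulus_mono : Monotone (dyadicAnnulus E) := by
  intro M M' h x hx
  have h2 : (1 : ℝ) ≤ 2 := by norm_num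
  exact ⟨(zpow_le_zpow_right₀ h2 (by omega)).trans hx.1,
    hx.2.trans_le (zpow_le_zpow_right₀ h2 (by omega))⟩

theorem exists_mem_dyadicAnnulus {x : E} (hx : x ≠ 0) : ∃ M, x ∈ dyadicAnnulus E M := by
  have hx₀ := norm_pos_iff.mpr hx
  obtain ⟨M, hM⟩ := pow_unbounded_of_one_lt (max ‖x‖ ‖x‖⁻¹) (by norm_num : (1 : ℝ) < 2)
  refine ⟨M, ?_, ?_⟩
  · rw [zpow_neg, zpow_natCast]
    exact inv_le_of_inv_le₀ hx₀ ((le_max_right _ _).trans hM.le)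
  · rw [zpow_natCast]
    exact (le_max_left _ _).trans_lt hM

theorem dyadicAnnulus_subset_biUnion_dyadicShell (M : ℕ) :
    dyadicAnnulus E M ⊆ ⋃ t ∈ Finset.Ico (-(M : ℤ)) M, dyadicShell E t := by
  intro x hx
  obtain ⟨t, ht⟩ := exists_mem_Ico_zpow (norm_pos_iff.mpr (ne_zero_of_mem_dyadicAnnulus hx))
    (by norm_num : (1 : ℝ) < 2)
  have h2 : (1 : ℝ) < 2 := by norm_num
  have hlow : -(M : ℤ) < t + 1 := (zpow_lt_zpow_iff_right₀ h2).mp (hx.1.trans_lt ht.2)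
  have hhigh : t < M := (zpow_lt_zpow_iff_right₀ h2).mp (ht.1.trans_lt hx.2)
  exact mem_biUnion (Finset.mem_coe.mpr (Finset.mem_Ico.mpr ⟨by omega, hhigh⟩)) ht

noncomputable def truncatedPower (E : Type*) [NormedAddCommGroup E] (β : ℝ) (M : ℕ) : E → ℝ≥0∞ :=
  (dyadicAnnulus E M).indicator fun y => ‖y‖ₑ ^ (-β)

theorem measurable_truncatedPower [MeasurableSpace E] [BorelSpace E] (β : ℝ) (M : ℕ) :
    Measurable (truncatedPower E β M) :=
  (measurable_enorm.pow_const _).indicator (measurableSet_dyadicAnnulus M)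

theorem rpow_mul_truncatedPower_rpow {p : ℝ} (hp : 0 < p) (lam d : ℝ) (M : ℕ) (y : E) :
    (‖y‖ₑ ^ lam * truncatedPower E (lam + d * (1 / p)) M y) ^ p
      = (dyadicAnnulus E M).indicator (fun y => ‖y‖ₑ ^ (-d)) y := by
  by_cases hy : y ∈ dyadicAnnulus E M
  · have hy₀ : ‖y‖ₑ ≠ 0 := enorm_ne_zero.mpr (ne_zero_of_mem_dyadicAnnulus hy)
    rw [truncatedPower, indicator_of_mem hy, indicator_of_mem hy,
      ← ENNReal.rpow_add _ _ hy₀ enorm_ne_top, ← ENNReal.rpow_mul]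
    congr 1
    field_simp
    ring
  · rw [truncatedPower, indicator_of_notMem hy, indicator_of_notMem hy, mul_zero,
      ENNReal.zero_rpow_of_pos hp]

variable [NormedSpace ℝ E]

theorem norm_two_zpow_smul (t : ℤ) (x : E) : ‖(2 : ℝ) ^ t • x‖ = 2 ^ t * ‖x‖ := by
  rw [norm_smul, Real.norm_of_nonneg (zpow_nonneg (by norm_num) _)]

theorem zpow_smul_mem_dyadicShell {s : ℤ} {x : E} (hx : x ∈ dyadicShell E s) (t : ℤ) :
    (2 : ℝ) ^ t • x ∈ dyadicShell E (t + s) := by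
  have h2t : (0 : ℝ) < 2 ^ t := _root_.zpow_pos (by norm_num) t
  rw [dyadicShell, mem_ofPred_eq, norm_two_zpow_smul, add_assoc, zpow_add₀ (by norm_num),
    zpow_add₀ (by norm_num)]
  exact ⟨mul_le_mul_of_nonneg_left hx.1 h2t.le, mul_lt_mul_of_pos_left hx.2 h2t⟩

theorem zpow_smul_mem_dyadicAnnulus {L n : ℕ} {x : E} (hx : x ∈ dyadicAnnulus E L) {t : ℤ}
    (ht : |t| ≤ n) : (2 : ℝ) ^ t • x ∈ dyadicAnnulus E (n + L) := by
  have h2 : (1 : ℝ) ≤ 2 := by norm_num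
  have h2t : (0 : ℝ) < 2 ^ t := _root_.zpow_pos (by norm_num) t
  obtain ⟨htn, hnt⟩ := abs_le.mp ht
  rw [dyadicAnnulus, mem_ofPred_eq, norm_two_zpow_smul]
  constructor
  · calc (2 : ℝ) ^ (-((n + L : ℕ) : ℤ)) = 2 ^ (-(n : ℤ)) * 2 ^ (-(L : ℤ)) := by
          rw [← zpow_add₀ (by norm_num)]; push_cast; ring_nf
      _ ≤ 2 ^ t * ‖x‖ := mul_le_mul (zpow_le_zpow_right₀ h2 htn) hx.1 (by positivity) h2t.le
  · calc 2 ^ t * ‖x‖ < 2 ^ t * 2 ^ (L : ℤ) := mul_lt_mul_of_pos_left hx.2 h2t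
      _ ≤ 2 ^ (n : ℤ) * 2 ^ (L : ℤ) := by gcongr
      _ = 2 ^ ((n + L : ℕ) : ℤ) := by rw [← zpow_add₀ (by norm_num)]; push_cast; ring_nf

theorem truncatedPower_zpow_smul {L n : ℕ} {x : E} (hx : x ∈ dyadicAnnulus E L) {t : ℤ}
    (ht : |t| ≤ n) (β : ℝ) :
    truncatedPower E β (n + L) ((2 : ℝ) ^ t • x)
      = ENNReal.ofReal (2 ^ t) ^ (-β) * ‖x‖ₑ ^ (-β) := by
  rw [truncatedPower, indicator_of_mem (zpow_smul_mem_dyadicAnnulus hx ht), enorm_smul,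
    Real.enorm_of_nonneg (zpow_nonneg (by norm_num) t), ENNReal.mul_rpow_of_ne_zero
      (ENNReal.ofReal_ne_zero_iff.mpr (_root_.zpow_pos (by norm_num) t))
      (enorm_ne_zero.mpr (ne_zero_of_mem_dyadicAnnulus hx))]

theorem measure_dyadicShell_pos [Nontrivial E] [MeasurableSpace E] (μ : Measure E)
    [μ.IsOpenPosMeasure] (t : ℤ) :
    0 < μ (dyadicShell E t) := by
  have h2t : (0 : ℝ) < 2 ^ t := _root_.zpow_pos (by norm_num) t
  obtain ⟨x, hx⟩ := exists_norm_eq E (by positivity : (0 : ℝ) ≤ 3 / 2 * 2 ^ t)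
  have hopen : IsOpen {x : E | 2 ^ t < ‖x‖ ∧ ‖x‖ < 2 ^ (t + 1)} :=
    (isOpen_lt continuous_const continuous_norm).inter (isOpen_lt continuous_norm continuous_const)
  refine (hopen.measure_pos μ ⟨x, ?_⟩).trans_le (measure_mono fun y hy => ⟨hy.1.le, hy.2⟩)
  rw [mem_ofPred_eq, hx, zpow_add_one₀ (by norm_num)]
  constructor <;> linarith

end Dyadic

section Haar

variable {E : Type*} [NormedAddCommGroup E] [NormedSpace ℝ E] [MeasurableSpace E] [BorelSpace E]
  [FiniteDimensional ℝ E] (μ : Measure E) [μ.IsAddHaarMeasure]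

theorem setLIntegral_smul_set (f : E → ℝ≥0∞) {r : ℝ} (hr : r ≠ 0) (s : Set E) :
    ∫⁻ x in r • s, f x ∂μ = ENNReal.ofReal |r ^ finrank ℝ E| * ∫⁻ y in s, f (r • y) ∂μ := by
  let e : E ≃ᵐ E := (Homeomorph.smul (Units.mk0 r hr)).toMeasurableEquiv
  have hpre : e ⁻¹' (r • s) = s := by
    ext y; exact Set.smul_mem_smul_set_iff₀ hr s y
  have hmap : ∫⁻ y in s, f (r • y) ∂μ = ENNReal.ofReal |(r ^ finrank ℝ E)⁻¹| *
      ∫⁻ x in r • s, f x ∂μ := by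
    calc ∫⁻ y in s, f (r • y) ∂μ = ∫⁻ y in e ⁻¹' (r • s), f (e y) ∂μ := by rw [hpre]; rfl
      _ = ∫⁻ x in r • s, f x ∂(μ.map (r • ·)) := by
        change _ = ∫⁻ x in r • s, f x ∂(μ.map e)
        rw [e.measurableEmbedding.restrict_map, lintegral_map_equiv]
      _ = _ := by rw [Measure.map_addHaar_smul μ hr, setLIntegral_smul_measure, smul_eq_mul]
  rw [hmap, ← mul_assoc, ← ENNReal.ofReal_mul (abs_nonneg _), ← abs_mul,
    mul_inv_cancel₀ (pow_ne_zero _ hr), abs_one, ENNReal.ofReal_one, one_mul]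

theorem setLIntegral_dyadicShell_rpow_neg_finrank_le (t : ℤ) :
    ∫⁻ x in dyadicShell E t, ‖x‖ₑ ^ (-(finrank ℝ E : ℝ)) ∂μ
      ≤ 2 ^ finrank ℝ E * μ (Metric.ball 0 1) := by
  set d := finrank ℝ E
  set a := ENNReal.ofReal (2 ^ t)
  have ha₀ : a ≠ 0 := ENNReal.ofReal_ne_zero_iff.mpr (_root_.zpow_pos (by norm_num) t)
  have hpoint : ∀ x ∈ dyadicShell E t, ‖x‖ₑ ^ (-(d : ℝ)) ≤ (a ^ d)⁻¹ := by
    intro x hx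
    rw [ENNReal.rpow_neg, ENNReal.rpow_natCast, ← ofReal_norm]
    exact ENNReal.inv_le_inv.mpr (pow_le_pow_left' (ENNReal.ofReal_le_ofReal hx.1) d)
  have hball : dyadicShell E t ⊆ Metric.ball 0 (2 ^ (t + 1)) := fun x hx => by
    simpa using hx.2
  calc ∫⁻ x in dyadicShell E t, ‖x‖ₑ ^ (-(d : ℝ)) ∂μ
      ≤ ∫⁻ _ in dyadicShell E t, (a ^ d)⁻¹ ∂μ :=
        setLIntegral_mono' (measurableSet_dyadicShell t) hpoint
    _ ≤ (a ^ d)⁻¹ * μ (Metric.ball 0 (2 ^ (t + 1))) := by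
        rw [setLIntegral_const]; gcongr
    _ = 2 ^ d * μ (Metric.ball 0 1) := by
        rw [μ.addHaar_ball_of_pos _ (_root_.zpow_pos (by norm_num) _), zpow_add_one₀ (by norm_num),
          ENNReal.ofReal_pow (by positivity), ENNReal.ofReal_mul (by positivity), mul_pow,
          ← mul_assoc, ← mul_assoc, ENNReal.inv_mul_cancel (pow_ne_zero _ ha₀) (by simp [a]),
          one_mul, ENNReal.ofReal_ofNat]

theorem setLIntegral_dyadicAnnulus_rpow_neg_finrank_le (M : ℕ) :
    ∫⁻ x in dyadicAnnulus E M, ‖x‖ₑ ^ (-(finrank ℝ E : ℝ)) ∂μ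
      ≤ 2 * M * (2 ^ finrank ℝ E * μ (Metric.ball 0 1)) := by
  calc ∫⁻ x in dyadicAnnulus E M, ‖x‖ₑ ^ (-(finrank ℝ E : ℝ)) ∂μ
      ≤ ∫⁻ x in ⋃ t ∈ Finset.Ico (-(M : ℤ)) M, dyadicShell E t, ‖x‖ₑ ^ (-(finrank ℝ E : ℝ)) ∂μ :=
        lintegral_mono_set (dyadicAnnulus_subset_biUnion_dyadicShell M)
    _ = ∑ t ∈ Finset.Ico (-(M : ℤ)) M, ∫⁻ x in dyadicShell E t, ‖x‖ₑ ^ (-(finrank ℝ E : ℝ)) ∂μ :=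
        lintegral_biUnion_finset (pairwise_disjoint_dyadicShell.set_pairwise _)
          (fun t _ => measurableSet_dyadicShell t) _
    _ ≤ ∑ _t ∈ Finset.Ico (-(M : ℤ)) M, 2 ^ finrank ℝ E * μ (Metric.ball 0 1) :=
        Finset.sum_le_sum fun t _ => setLIntegral_dyadicShell_rpow_neg_finrank_le μ t
    _ = 2 * M * (2 ^ finrank ℝ E * μ (Metric.ball 0 1)) := by
        rw [Finset.sum_const, Int.card_Ico, show ((M : ℤ) - -(M : ℤ)).toNat = 2 * M by omega,
          nsmul_eq_mul]
        push_cast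
        ring

end Haar

section BrascampLieb

variable {m k N : ℕ}

theorem wnorm_truncatedPower_le {p : ℝ} (hp : 0 ≤ p) (lam : ℝ) (M : ℕ) :
    wnorm p lam (truncatedPower (EuclideanSpace ℝ (Fin k)) (lam + k * (1 / p)) M)
      ≤ (2 * M * (2 ^ k * volume (Metric.ball (0 : EuclideanSpace ℝ (Fin k)) 1))) ^ (1 / p) := by
  -- `p = 0` is how `1 / p = 0` (that is, `p = ∞`) is encoded; both sides are then `1`.
  rcases hp.eq_or_lt with rfl | hp
  · simp [wnorm]
  simp only [wnorm, ← _root_.enorm_eq_nnnorm, rpow_mul_truncatedPower_rpow hp]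
  rw [lintegral_indicator (measurableSet_dyadicAnnulus M)]
  gcongr
  simpa using setLIntegral_dyadicAnnulus_rpow_neg_finrank_le
    (volume : Measure (EuclideanSpace ℝ (Fin k))) M

def dotvLinearMap (v : Fin m → ℝ) :
    (Fin m → EuclideanSpace ℝ (Fin k)) →ₗ[ℝ] EuclideanSpace ℝ (Fin k) :=
  ∑ i, v i • LinearMap.proj i

theorem dotvLinearMap_apply (v : Fin m → ℝ) (x : Fin m → EuclideanSpace ℝ (Fin k)) :
    dotvLinearMap v x = dotv v x := by
  simp [dotvLinearMap, dotv]

theorem continuous_dotv (v : Fin m → ℝ) : Continuous (dotv (k := k) v) := by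
  simpa only [funext (dotvLinearMap_apply v)] using
    (dotvLinearMap (k := k) v).continuous_of_finiteDimensional

theorem dotv_smul (v : Fin m → ℝ) (c : ℝ) (x : Fin m → EuclideanSpace ℝ (Fin k)) :
    dotv v (c • x) = c • dotv v x := by
  simp only [← dotvLinearMap_apply, map_smul]

theorem volume_setOf_dotv_eq_zero (hk : 0 < k) {v : Fin m → ℝ} (hv : v ≠ 0) :
    volume {x : Fin m → EuclideanSpace ℝ (Fin k) | dotv v x = 0} = 0 := by
  have : Nonempty (Fin k) := ⟨⟨0, hk⟩⟩
  obtain ⟨i, hi⟩ := ne_iff.mp hv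
  obtain ⟨w, hw⟩ := exists_ne (0 : EuclideanSpace ℝ (Fin k))
  have hker : {x : Fin m → EuclideanSpace ℝ (Fin k) | dotv v x = 0} =
      (LinearMap.ker (dotvLinearMap (k := k) v) : Set _) := by
    ext x; simp [dotvLinearMap_apply]
  rw [hker]
  refine Measure.addHaar_submodule volume _ fun htop => ?_
  have hmem : Pi.single i w ∈ LinearMap.ker (dotvLinearMap v) := htop ▸ Submodule.mem_top
  rw [LinearMap.mem_ker, dotvLinearMap_apply] at hmem
  simp only [dotv, Pi.single_apply, smul_ite, smul_zero, Finset.sum_ite_eq', Finset.mem_univ,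
    if_true, smul_eq_zero, hw, or_false] at hmem
  exact hi hmem

def nondegenerateShell (v : Fin N → Fin m → ℝ) (L : ℕ) : Set (Fin m → EuclideanSpace ℝ (Fin k)) :=
  dyadicShell _ 0 ∩ ⋂ j, dotv (v j) ⁻¹' dyadicAnnulus _ L

theorem measurableSet_nondegenerateShell (v : Fin N → Fin m → ℝ) (L : ℕ) :
    MeasurableSet (nondegenerateShell (k := k) v L) :=
  (measurableSet_dyadicShell 0).inter <| MeasurableSet.iInter fun j =>
    (measurableSet_dyadicAnnulus L).preimage (continuous_dotv (v j)).measurable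

theorem exists_volume_nondegenerateShell_pos (hm : 0 < m) (hk : 0 < k) {v : Fin N → Fin m → ℝ}
    (hv : ∀ j, v j ≠ 0) : ∃ L, 0 < volume (nondegenerateShell (k := k) v L) := by
  have : Nonempty (Fin k) := ⟨⟨0, hk⟩⟩
  have : Nonempty (Fin m) := ⟨⟨0, hm⟩⟩
  by_contra! h
  have hcover : dyadicShell (Fin m → EuclideanSpace ℝ (Fin k)) 0 ⊆
      (⋃ L, nondegenerateShell v L) ∪ ⋃ j, {x | dotv (v j) x = 0} := by
    intro x hx
    by_cases hx0 : ∃ j, dotv (v j) x = 0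
    · exact Or.inr (mem_iUnion.mpr hx0)
    rw [not_exists] at hx0
    have hev : ∀ᶠ L in atTop, ∀ j, dotv (v j) x ∈ dyadicAnnulus _ L :=
      eventually_all.mpr fun j =>
        have ⟨L, hL⟩ := exists_mem_dyadicAnnulus (hx0 j)
        eventually_atTop.mpr ⟨L, fun _ h => dyadicAnnulus_mono h hL⟩
    obtain ⟨L, hL⟩ := hev.exists
    exact Or.inl (mem_iUnion.mpr ⟨L, hx, mem_iInter.mpr hL⟩)
  have hnull := measure_mono_null hcover <| measure_union_null
    (measure_iUnion_null fun L => nonpos_iff_eq_zero.mp (h L))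
    (measure_iUnion_null fun j => volume_setOf_dotv_eq_zero hk (hv j))
  exact (measure_dyadicShell_pos volume 0).ne' hnull

theorem setLIntegral_zpow_smul_nondegenerateShell (v : Fin N → Fin m → ℝ) (β : Fin N → ℝ)
    {L n : ℕ} {t : ℤ} (ht : |t| ≤ n) :
    ∫⁻ x in (2 : ℝ) ^ t • nondegenerateShell (k := k) v L,
        ∏ j, truncatedPower _ (β j) (n + L) (dotv (v j) x)
      = ENNReal.ofReal (2 ^ t) ^ ((m * k : ℕ) - ∑ j, β j) *
        ∫⁻ y in nondegenerateShell (k := k) v L, ∏ j, ‖dotv (v j) y‖ₑ ^ (-β j) := by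
  have ha₀ : ENNReal.ofReal (2 ^ t) ≠ 0 :=
    ENNReal.ofReal_ne_zero_iff.mpr (_root_.zpow_pos (by norm_num) t)
  have hpoint : ∀ y ∈ nondegenerateShell (k := k) v L,
      ∏ j, truncatedPower _ (β j) (n + L) (dotv (v j) ((2 : ℝ) ^ t • y))
        = ENNReal.ofReal (2 ^ t) ^ (-∑ j, β j) * ∏ j, ‖dotv (v j) y‖ₑ ^ (-β j) := by
    intro y hy
    simp only [dotv_smul, truncatedPower_zpow_smul (mem_iInter.mp hy.2 _) ht,
      Finset.prod_mul_distrib, ← Finset.sum_neg_distrib,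
      ENNReal.rpow_sum _ ha₀ ENNReal.ofReal_ne_top]
  rw [setLIntegral_smul_set volume _ (zpow_ne_zero _ two_ne_zero),
    setLIntegral_congr_fun (measurableSet_nondegenerateShell v L) hpoint,
    lintegral_const_mul' _ _ (ENNReal.rpow_ne_top_of_ne_zero ha₀ ENNReal.ofReal_ne_top),
    ← mul_assoc, sub_eq_add_neg, ENNReal.rpow_add _ _ ha₀ ENNReal.ofReal_ne_top,
    ENNReal.rpow_natCast, abs_of_nonneg (by positivity), ENNReal.ofReal_pow (by positivity)]
  simp [Module.finrank_pi_fintype]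

theorem setLIntegral_nondegenerateShell_ne_zero {v : Fin N → Fin m → ℝ} {L : ℕ}
    (hL : 0 < volume (nondegenerateShell (k := k) v L)) (β : Fin N → ℝ) :
    ∫⁻ y in nondegenerateShell (k := k) v L, ∏ j, ‖dotv (v j) y‖ₑ ^ (-β j) ≠ 0 := by
  have hmeas : Measurable fun y : Fin m → EuclideanSpace ℝ (Fin k) =>
      ∏ j, ‖dotv (v j) y‖ₑ ^ (-β j) :=
    Finset.measurable_prod _ fun j _ =>
      ((continuous_dotv (v j)).measurable.enorm).pow_const _
  rw [Ne, setLIntegral_eq_zero_iff (measurableSet_nondegenerateShell v L) hmeas]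
  intro hzero
  refine hL.ne' (measure_eq_zero_iff_ae_notMem.mpr ?_)
  filter_upwards [hzero] with y hy hyS
  refine Finset.prod_ne_zero_iff.mpr (fun j _ => ?_) (hy hyS)
  exact (ENNReal.rpow_pos (enorm_pos.mpr (ne_zero_of_mem_dyadicAnnulus (mem_iInter.mp hyS.2 j)))
    enorm_ne_top).ne'

theorem natCast_mul_setLIntegral_le_BLform (v : Fin N → Fin m → ℝ) (β : Fin N → ℝ) (n L : ℕ) :
    n * ∫⁻ y in nondegenerateShell (k := k) v L, ∏ j, ‖dotv (v j) y‖ₑ ^ (-β j)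
      ≤ BLform v fun j => truncatedPower (EuclideanSpace ℝ (Fin k)) (β j) (n + L) := by
  set c := ∫⁻ y in nondegenerateShell (k := k) v L, ∏ j, ‖dotv (v j) y‖ₑ ^ (-β j)
  set F := fun x : Fin m → EuclideanSpace ℝ (Fin k) =>
    ∏ j, truncatedPower _ (β j) (n + L) (dotv (v j) x)
  set e : ℝ := (m * k : ℕ) - ∑ j, β j
  -- Rescaling by `2 ^ t` multiplies the integral by `2 ^ (t * e)`, so we rescale in the direction
  -- in which this factor is at least `1`.
  obtain ⟨σ, hσ, hσe⟩ : ∃ σ : ℤ, |σ| = 1 ∧ 0 ≤ σ * e := by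
    rcases le_total 0 e with h | h
    · exact ⟨1, by simp, by simpa using h⟩
    · exact ⟨-1, by simp, by simpa using h⟩
  set P := fun i : ℕ => (2 : ℝ) ^ (σ * i) • nondegenerateShell (k := k) v L
  have hP_sub : ∀ i, P i ⊆ dyadicShell _ (σ * i) := by
    rintro i _ ⟨y, hy, rfl⟩
    simpa using zpow_smul_mem_dyadicShell hy.1 (σ * i)
  have hσ_inj : Injective fun i : ℕ => σ * i := fun i i' h => by
    have : σ ≠ 0 := by rintro rfl; simp at hσ
    exact_mod_cast mul_left_cancel₀ this h
  have hdisj : (Finset.range n : Set ℕ).PairwiseDisjoint P := fun i _ i' _ hii' =>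
    (pairwise_disjoint_dyadicShell (hσ_inj.ne hii')).mono (hP_sub i) (hP_sub i')
  have hpiece : ∀ i ∈ Finset.range n, c ≤ ∫⁻ x in P i, F x := by
    intro i hi
    have hti : |σ * i| ≤ n := by
      rw [abs_mul, hσ, one_mul, Nat.abs_cast]; exact_mod_cast (Finset.mem_range.mp hi).le
    rw [setLIntegral_zpow_smul_nondegenerateShell v β hti]
    refine le_mul_of_one_le_left' ?_
    rw [← Real.rpow_intCast, ← ENNReal.ofReal_rpow_of_pos (by norm_num), ENNReal.ofReal_ofNat,
      ← ENNReal.rpow_mul, ← ENNReal.rpow_zero (x := 2)]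
    refine ENNReal.rpow_le_rpow_of_exponent_le (by norm_num) ?_
    rw [Int.cast_mul, Int.cast_natCast, mul_comm (σ : ℝ), mul_assoc]
    exact mul_nonneg (Nat.cast_nonneg i) hσe
  calc (n : ℝ≥0∞) * c = ∑ _i ∈ Finset.range n, c := by simp
    _ ≤ ∑ i ∈ Finset.range n, ∫⁻ x in P i, F x := Finset.sum_le_sum hpiece
    _ = ∫⁻ x in ⋃ i ∈ Finset.range n, P i, F x := (lintegral_biUnion_finset hdisj
        (fun i _ => (measurableSet_nondegenerateShell v L).const_smul₀ _) F).symm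
    _ ≤ BLform v fun j => truncatedPower _ (β j) (n + L) := setLIntegral_le_lintegral _ _

end BrascampLieb

theorem necessary_condition_general (m k N : ℕ) (hm : 0 < m) (hk : 0 < k)
    (v : Fin N → Fin m → ℝ) (hv0 : ∀ j, v j ≠ 0)
    (p lam : Fin N → ℝ)
    (hp : ∀ j, 0 ≤ 1 / p j ∧ 1 / p j ≤ 1)
    (C : ℝ≥0∞) (hC : C ≠ ⊤)
    (hbound : ∀ f : Fin N → EuclideanSpace ℝ (Fin k) → ℝ≥0∞, (∀ j, Measurable (f j)) →
      BLform v f ≤ C * ∏ j, wnorm (p j) (lam j) (f j)) :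
    1 ≤ ∑ j, 1 / p j := by
  set s := ∑ j, 1 / p j
  have hs : 0 ≤ s := Finset.sum_nonneg fun j _ => (hp j).1
  set β := fun j => lam j + k * (1 / p j)
  set D := 2 ^ k * volume (Metric.ball (0 : EuclideanSpace ℝ (Fin k)) 1)
  have : Nonempty (Fin k) := ⟨⟨0, hk⟩⟩
  have hD₀ : D ≠ 0 := mul_ne_zero (by simp) (Metric.measure_ball_pos _ _ one_pos).ne'
  have hD : D ≠ ⊤ := ENNReal.mul_ne_top (by simp) measure_ball_lt_top.ne
  obtain ⟨L, hL⟩ := exists_volume_nondegenerateShell_pos hm hk hv0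
  refine one_le_of_forall_mul_natCast_le_mul_rpow (setLIntegral_nondegenerateShell_ne_zero hL β)
    (F := C * (2 * (L + 1) * D) ^ s) (by finiteness) fun n hn => ?_
  have hnL : (2 * (n + L : ℕ) * D : ℝ≥0∞) ≠ 0 := by simp [hD₀]; omega
  calc _ ≤ BLform v fun j => truncatedPower _ (β j) (n + L) :=
        natCast_mul_setLIntegral_le_BLform v β n L
    _ ≤ C * ∏ j, wnorm (p j) (lam j) (truncatedPower _ (β j) (n + L)) :=
        hbound _ fun j => measurable_truncatedPower _ _
    _ ≤ C * ∏ j, (2 * (n + L : ℕ) * D) ^ (1 / p j) := by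
        gcongr with j
        exact wnorm_truncatedPower_le (one_div_nonneg.mp (hp j).1) _ _
    _ = C * (2 * (n + L : ℕ) * D) ^ s := by
        rw [ENNReal.rpow_sum _ hnL (by finiteness)]
    _ ≤ C * (2 * ((L + 1) * n : ℕ) * D) ^ s := by
        gcongr
        nlinarith
    _ = C * (2 * (L + 1) * D) ^ s * (n : ℝ≥0∞) ^ s := by
        rw [mul_assoc C, ← ENNReal.mul_rpow_of_nonneg _ _ hs]
        push_cast
        ring_nf

/-- A necessary condition for the weighted Brascamp–Lieb estimate. -/
theorem necessary_condition (m k N : ℕ) (hm : 0 < m) (hk : 0 < k) (hN : 0 < N)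
    (v : Fin N → Fin m → ℝ) (hv0 : ∀ j, v j ≠ 0) (hvinj : Function.Injective v)
    (hnc : ∀ i j, i ≠ j → ∀ c : ℝ, v i ≠ c • v j)
    (p lam : Fin N → ℝ)
    (hp : ∀ j, 0 ≤ 1 / p j ∧ 1 / p j ≤ 1)
    (C : ℝ≥0∞) (hC : C ≠ ⊤)
    (hbound : ∀ f : Fin N → EuclideanSpace ℝ (Fin k) → ℝ≥0∞, (∀ j, Measurable (f j)) →
      BLform v f ≤ C * ∏ j, wnorm (p j) (lam j) (f j)) :
    1 ≤ ∑ j, 1 / p j :=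
  necessary_condition_general m k N hm hk v hv0 p lam hp C hC hbound
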